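/- arXiv:1207.1930 — 3 statements merged into one kernel-verified Lean document; each statement's English description precedes it below -/
import Mathlib

section
/- Let A be a C*-algebra and let E be an A-A-equivalence bimodule which is isomorphic, as a right Hilbert A-module, to the standard module X_A (the module A with inner product ⟨a,b⟩_A = a*b). Then there exists an automorphism α of A such that E is isomorphic to E_α^A as an A-A-equivalence bimodule. -/
open scoped MultiplierAlgebra Kronecker
open Filter Topology
open scoped ENNReal NNReal

set_option linter.unusedSectionVars false
set_option synthInstance.maxHeartbeats 1000000
set_option maxHeartbeats 1000000

noncomputable section

universe u v w

namespace Paper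

section B1


variable (A : Type*) [NonUnitalCStarAlgebra A] [PartialOrder A] [StarOrderedRing A]

/-- A C*-algebra is simple if it is nonzero and has no nontrivial closed two-sided ideals. -/
def IsSimpleCStar : Prop :=
  (∃ a : A, a ≠ 0) ∧
    ∀ I : Submodule ℂ A, (∀ x ∈ I, ∀ a : A, a * x ∈ I ∧ x * a ∈ I) →
      IsClosed (I : Set A) → I = ⊥ ∨ I = ⊤

/-- σ-unital: existence of a strictly positive element, i.e. `h ≥ 0` with `hAh` dense. -/
def SigmaUnital : Prop :=
  ∃ h : A, 0 ≤ h ∧ Dense (Set.range fun a : A => h * a * h)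

/-- The hereditary C*-subalgebra `\overline{hAh}` generated by a positive element `h`. -/
def HereditarySub (h : A) : Set A := closure (Set.range fun a : A => h * a * h)

/-- A general hereditary C*-subalgebra. -/
structure IsHereditarySubalgebra (S : Set A) : Prop where
  isClosed : IsClosed S
  zero_mem : (0 : A) ∈ S
  add_mem : ∀ x ∈ S, ∀ y ∈ S, x + y ∈ S
  smul_mem : ∀ (c : ℂ), ∀ x ∈ S, c • x ∈ S
  mul_mem : ∀ x ∈ S, ∀ y ∈ S, x * y ∈ S
  star_mem : ∀ x ∈ S, star x ∈ S
  hereditary : ∀ a b : A, 0 ≤ a → a ≤ b → b ∈ S → a ∈ S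

/-- A densely defined lower semicontinuous trace on (a subalgebra `S` of) `A`;
the function is only meaningful on positive elements of `S`. -/
structure LscTraceOn (S : Set A) where
  toFun : A → ℝ≥0∞
  map_add : ∀ a ∈ S, ∀ b ∈ S, 0 ≤ a → 0 ≤ b → toFun (a + b) = toFun a + toFun b
  map_smul : ∀ (r : ℝ≥0), ∀ a ∈ S, 0 ≤ a → toFun (((r : ℝ) : ℂ) • a) = r * toFun a
  tracial : ∀ x : A, x ∈ S → toFun (star x * x) = toFun (x * star x)
  lsc : LowerSemicontinuousOn toFun {a | a ∈ S ∧ 0 ≤ a}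
  densely_defined : ∀ a ∈ S, 0 ≤ a → a ∈ closure {b | b ∈ S ∧ 0 ≤ b ∧ toFun b ≠ ∞}

/-- A densely defined lower semicontinuous trace on `A`. -/
abbrev LscTrace := LscTraceOn A Set.univ

/-- A trace is nontrivial (nonzero) if it does not vanish on all positive elements. -/
def LscTraceOn.Nontrivial {S : Set A} (T : LscTraceOn A S) : Prop :=
  ∃ c : A, 0 ≤ c ∧ T.toFun c ≠ 0

/-- A tracial state on `A`. -/
structure TracialState where
  toFun : A →L[ℂ] ℂ
  tracial : ∀ a b : A, toFun (a * b) = toFun (b * a)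
  pos : ∀ a : A, 0 ≤ a → 0 ≤ (toFun a).re ∧ (toFun a).im = 0
  norm_one : ‖toFun‖ = 1

/-- Every densely defined lower semicontinuous trace on `A` is bounded. -/
def NoUnboundedTrace : Prop :=
  ∀ T : LscTrace A, ∃ C : ℝ≥0, ∀ a : A, 0 ≤ a → ‖a‖ ≤ 1 → T.toFun a ≤ C

variable (AK : Type*) [NonUnitalCStarAlgebra AK] [PartialOrder AK] [StarOrderedRing AK]

/-- A model for the stabilization `A ⊗ K`: the algebra `AK` is generated by a system of
"matrix corners" `ι a i j` (corresponding to `a ⊗ e_{ij}`). -/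
structure Stabilization where
  ι : A → ℕ → ℕ → AK
  ι_add : ∀ a b i j, ι (a + b) i j = ι a i j + ι b i j
  ι_smul : ∀ (c : ℂ) a i j, ι (c • a) i j = c • ι a i j
  ι_mul : ∀ (a b : A) (i j k l : ℕ), ι a i j * ι b k l = if j = k then ι (a * b) i l else 0
  ι_star : ∀ a i j, star (ι a i j) = ι (star a) j i
  ι_norm : ∀ a i j, ‖ι a i j‖ = ‖a‖
  dense_span : Dense (Submodule.span ℂ {x : AK | ∃ a i j, x = ι a i j} : Set AK)

variable {A AK}

/-- Cuntz subequivalence of positive elements. -/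
def CuntzLE (a b : AK) : Prop :=
  ∃ x : ℕ → AK, Tendsto (fun n => ‖star (x n) * b * x n - a‖) atTop (𝓝 0)

/-- Cuntz equivalence of positive elements. -/
def CuntzEquiv (a b : AK) : Prop := CuntzLE a b ∧ CuntzLE b a

variable (AK)

/-- The Cuntz semigroup is almost unperforated: `(k+1)[a] ≤ k[b]` implies `[a] ≤ [b]`.
Sums of copies of a class are realized by sums of pairwise orthogonal Cuntz-equivalent
elemets of the stable algebra. -/
def CuAlmostUnperforated : Prop :=
  ∀ (k : ℕ), 0 < k → ∀ (a b : AK), 0 ≤ a → 0 ≤ b →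
    ∀ (u : Fin (k + 1) → AK) (v : Fin k → AK),
      (∀ i, 0 ≤ u i ∧ CuntzEquiv (u i) a) → (∀ i j, i ≠ j → u i * u j = 0) →
      (∀ i, 0 ≤ v i ∧ CuntzEquiv (v i) b) → (∀ i j, i ≠ j → v i * v j = 0) →
      CuntzLE (∑ i, u i) (∑ i, v i) → CuntzLE a b

/-- `A ⊗ K` contains no nonzero projections. -/
def StablyProjectionless : Prop :=
  ∀ p : AK, star p = p → p * p = p → p = 0

variable {AK}

/-- The dimension function `d_τ(a) = lim_n τ(a^{1/n})` associated to a densely defined lower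
semicontinuous trace (on the stabilization). -/
def dimTrace (T : LscTrace AK) (a : AK) : ℝ≥0∞ :=
  ⨆ n : ℕ, T.toFun (cfcₙ (fun t : ℝ => t ^ ((n : ℝ) + 1)⁻¹) a)

variable (AK)

/-- Strict comparison of positive elements by (nonzero) traces. -/
def StrictComparison : Prop :=
  ∀ a b : AK, 0 ≤ a → 0 ≤ b →
    (∀ T : LscTrace AK, T.Nontrivial →
      dimTrace T a < dimTrace T b ∧ dimTrace T b ≠ ∞) →
    CuntzLE a b

/-- Almost stable rank one: every σ-unital hereditary subalgebra `B` of `A ⊗ K` satisfies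
`B ⊆ closure (GL(B^~))`. -/
def AlmostStableRankOne : Prop :=
  ∀ h : AK, 0 ≤ h → ∀ b ∈ HereditarySub AK h, ∀ ε : ℝ, 0 < ε →
    ∃ z w : Unitization ℂ AK, z.snd ∈ HereditarySub AK h ∧ w.snd ∈ HereditarySub AK h ∧
      z * w = 1 ∧ w * z = 1 ∧ ‖z - (b : Unitization ℂ AK)‖ < ε

variable {AK}

variable (A) in
/-- The hereditary subalgebra generated by `h` is isomorphic to `A`. -/
def HerIso (h : AK) : Prop :=
  ∃ f : A →⋆ₙₐ[ℂ] AK, Isometry f ∧ Set.range f = HereditarySub AK h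

variable (A) in
/-- The fundamental group (as a subset of `(0,∞]`):
`{ d_τ(h) : h positive in A ⊗ K, \overline{h(A⊗K)h} ≅ A }`. -/
def FundSet (τK : LscTrace AK) : Set ℝ≥0∞ :=
  {r | ∃ h : AK, 0 ≤ h ∧ HerIso A h ∧ r = dimTrace τK h}


end B1

section B2


variable (A : Type*) [NonUnitalCStarAlgebra A] [PartialOrder A] [StarOrderedRing A]

/-- Every element of a C*-algebra is a ℂ-linear combination of products. -/
lemma span_products_eq_top :
    Submodule.span ℂ {x : A | ∃ y z : A, x = y * z} = ⊤ := by
  rw [Submodule.eq_top_iff']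
  have key : ∀ s : A, IsSelfAdjoint s →
      s ∈ Submodule.span ℂ {x : A | ∃ y z : A, x = y * z} := by
    intro s hs
    have h1 : s⁺ ∈ {x : A | ∃ y z : A, x = y * z} :=
      ⟨CFC.sqrt s⁺, CFC.sqrt s⁺, (CFC.sqrt_mul_sqrt_self _ (CFC.posPart_nonneg s)).symm⟩
    have h2 : s⁻ ∈ {x : A | ∃ y z : A, x = y * z} :=
      ⟨CFC.sqrt s⁻, CFC.sqrt s⁻, (CFC.sqrt_mul_sqrt_self _ (CFC.negPart_nonneg s)).symm⟩
    have := CFC.posPart_sub_negPart s hs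
    rw [← this]
    exact sub_mem (Submodule.subset_span h1) (Submodule.subset_span h2)
  intro a
  have hre : IsSelfAdjoint ((2⁻¹ : ℂ) • (a + star a)) := by
    rw [IsSelfAdjoint, star_smul, star_add, star_star]
    congr 1
    · simp
    · exact add_comm _ _
  have him : IsSelfAdjoint ((-(Complex.I) * 2⁻¹) • (a - star a)) := by
    rw [IsSelfAdjoint, star_smul, star_sub, star_star]
    rw [show star (-(Complex.I) * 2⁻¹) = Complex.I * 2⁻¹ by simp]
    rw [show (star a - a) = -(a - star a) by abel]
    rw [smul_neg, ← neg_smul, neg_mul_eq_neg_mul]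
  have key2 : a = (2⁻¹ : ℂ) • (a + star a) +
      Complex.I • ((-(Complex.I) * 2⁻¹) • (a - star a)) := by
    rw [smul_smul]
    rw [show Complex.I * (-(Complex.I) * 2⁻¹) = (2⁻¹ : ℂ) by
      rw [← mul_assoc, mul_neg, Complex.I_mul_I]; ring]
    rw [smul_add, smul_sub]
    rw [show ((2⁻¹ : ℂ) • a + (2⁻¹ : ℂ) • star a + ((2⁻¹ : ℂ) • a - (2⁻¹ : ℂ) • star a))
        = (2⁻¹ : ℂ) • a + (2⁻¹ : ℂ) • a by abel]
    rw [← add_smul]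
    norm_num
  rw [key2]
  exact add_mem (key _ hre) (Submodule.smul_mem _ _ (key _ him))

variable (E F E₁ E₂ E₃ : Type*)
  [NormedAddCommGroup E] [NormedSpace ℂ E] [CompleteSpace E]
  [NormedAddCommGroup F] [NormedSpace ℂ F] [CompleteSpace F]
  [NormedAddCommGroup E₁] [NormedSpace ℂ E₁] [CompleteSpace E₁]
  [NormedAddCommGroup E₂] [NormedSpace ℂ E₂] [CompleteSpace E₂]
  [NormedAddCommGroup E₃] [NormedSpace ℂ E₃] [CompleteSpace E₃]

/-- A (complete) right Hilbert `A`-module structure on `E`. -/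
structure RightHilbertModule where
  smulR : E → A → E
  inner : E → E → A
  add_smulR : ∀ x y a, smulR (x + y) a = smulR x a + smulR y a
  smulR_add : ∀ x a b, smulR x (a + b) = smulR x a + smulR x b
  smulR_mul : ∀ x a b, smulR (smulR x a) b = smulR x (a * b)
  smulC_smulR : ∀ (c : ℂ) x a, smulR (c • x) a = c • smulR x a
  smulR_smulC : ∀ (c : ℂ) x a, smulR x (c • a) = c • smulR x a
  inner_add_right : ∀ x y z, inner x (y + z) = inner x y + inner x z
  inner_smulC_right : ∀ (c : ℂ) x y, inner x (c • y) = c • inner x y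
  inner_smulR_right : ∀ x y a, inner x (smulR y a) = inner x y * a
  inner_conj : ∀ x y, star (inner x y) = inner y x
  inner_nonneg : ∀ x, 0 ≤ inner x x
  norm_inner : ∀ x, ‖x‖ ^ 2 = ‖inner x x‖

variable {A E F E₁ E₂ E₃}

/-- A countable basis (frame) of a right Hilbert module. -/
def RightHilbertModule.IsBasis (M : RightHilbertModule A E) (ξ : ℕ → E) : Prop :=
  ∀ η : E, Tendsto (fun N => ∑ i ∈ Finset.range N, M.smulR (ξ i) (M.inner (ξ i) η))
    atTop (𝓝 η)

/-- A right Hilbert module is countably generated. -/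
def RightHilbertModule.CountablyGenerated (M : RightHilbertModule A E) : Prop :=
  ∃ g : ℕ → E,
    Dense (Submodule.span ℂ ({x | ∃ n a, x = M.smulR (g n) a} ∪ Set.range g) : Set E)

/-- Isomorphism of right Hilbert modules. -/
def RightModuleIso (M : RightHilbertModule A E) (N : RightHilbertModule A F) : Prop :=
  ∃ Φ : E ≃ₗ[ℂ] F, (∀ x a, Φ (M.smulR x a) = N.smulR (Φ x) a) ∧
    ∀ x y, N.inner (Φ x) (Φ y) = M.inner x y

variable (A E)

/-- An `A`–`A`-equivalence bimodule (imprimitivity bimodule). -/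
structure EquivalenceBimodule extends RightHilbertModule A E where
  smulL : A → E → E
  smulL_add : ∀ a x y, smulL a (x + y) = smulL a x + smulL a y
  add_smulL : ∀ a b x, smulL (a + b) x = smulL a x + smulL b x
  smulL_mul : ∀ a b x, smulL (a * b) x = smulL a (smulL b x)
  smulC_smulL : ∀ (c : ℂ) a x, smulL (c • a) x = c • smulL a x
  smulL_smulR : ∀ a x b, smulL a (smulR x b) = smulR (smulL a x) b
  innerL : E → E → A
  innerL_add_left : ∀ x y z, innerL (x + y) z = innerL x z + innerL y z
  innerL_smulL_left : ∀ a x y, innerL (smulL a x) y = a * innerL x y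
  innerL_smulC_left : ∀ (c : ℂ) x y, innerL (c • x) y = c • innerL x y
  innerL_conj : ∀ x y, star (innerL x y) = innerL y x
  innerL_nonneg : ∀ x, 0 ≤ innerL x x
  compat : ∀ x y z, smulL (innerL x y) z = smulR x (inner y z)
  fullR : Dense (Submodule.span ℂ {a : A | ∃ x y, a = inner x y} : Set A)
  fullL : Dense (Submodule.span ℂ {a : A | ∃ x y, a = innerL x y} : Set A)

variable {A E}

/-- Isomorphism of equivalence bimodules. -/
def BimoduleIso (M : EquivalenceBimodule A E) (N : EquivalenceBimodule A F) : Prop :=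
  ∃ Φ : E ≃ₗ[ℂ] F, (∀ x a, Φ (M.smulR x a) = N.smulR (Φ x) a) ∧
    (∀ a x, Φ (M.smulL a x) = N.smulL a (Φ x)) ∧
    (∀ x y, N.inner (Φ x) (Φ y) = M.inner x y) ∧
    (∀ x y, N.innerL (Φ x) (Φ y) = M.innerL x y)

variable (A)

lemma dense_of_span_products {s : Set A} (hsub : {x : A | ∃ y z : A, x = y * z} ⊆ s) :
    Dense (Submodule.span ℂ s : Set A) := by
  have : Submodule.span ℂ s = ⊤ :=
    eq_top_iff.mpr (by rw [← span_products_eq_top A]; exact Submodule.span_mono hsub)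
  rw [this]
  simp [Submodule.top_coe, dense_univ]

/-- The standard right Hilbert module `X_A = A` with `⟨a,b⟩ = a* b`. -/
def standardRightModule : RightHilbertModule A A where
  smulR x a := x * a
  inner x y := star x * y
  add_smulR x y a := by rw [add_mul]
  smulR_add x a b := by rw [mul_add]
  smulR_mul x a b := by rw [mul_assoc]
  smulC_smulR c x a := by rw [smul_mul_assoc]
  smulR_smulC c x a := by rw [mul_smul_comm]
  inner_add_right x y z := by rw [mul_add]
  inner_smulC_right c x y := by rw [mul_smul_comm]
  inner_smulR_right x y a := by rw [mul_assoc]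
  inner_conj x y := by rw [star_mul, star_star]
  inner_nonneg x := star_mul_self_nonneg x
  norm_inner x := by rw [CStarRing.norm_star_mul_self, sq]

/-- The bimodule `E_α^A`: the space `A` with right action and right inner product twisted
by the automorphism `α`. -/
def Ealpha (α : A ≃⋆ₐ[ℂ] A) : EquivalenceBimodule A A where
  smulR x a := x * α a
  inner x y := α.symm (star x * y)
  add_smulR x y a := by rw [add_mul]
  smulR_add x a b := by rw [map_add, mul_add]
  smulR_mul x a b := by rw [map_mul, mul_assoc]
  smulC_smulR c x a := by rw [smul_mul_assoc]
  smulR_smulC c x a := by rw [map_smul, mul_smul_comm]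
  inner_add_right x y z := by rw [mul_add, map_add]
  inner_smulC_right c x y := by rw [mul_smul_comm, map_smul]
  inner_smulR_right x y a := by
    rw [← mul_assoc, map_mul, StarAlgEquiv.symm_apply_apply]
  inner_conj x y := by rw [← map_star, star_mul, star_star]
  inner_nonneg x := by
    have h : star x * x = α (star (α.symm x) * α.symm x) := by
      rw [map_mul, map_star, StarAlgEquiv.apply_symm_apply]
    rw [h, StarAlgEquiv.symm_apply_apply]
    exact star_mul_self_nonneg _
  norm_inner x := by
    rw [NonUnitalStarAlgHom.norm_map α.symm α.symm.injective,
      CStarRing.norm_star_mul_self, sq]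
  smulL a x := a * x
  smulL_add a x y := mul_add a x y
  add_smulL a b x := add_mul a b x
  smulL_mul a b x := mul_assoc a b x
  smulC_smulL c a x := smul_mul_assoc c a x
  smulL_smulR a x b := by rw [mul_assoc]
  innerL x y := x * star y
  innerL_add_left x y z := add_mul x y _
  innerL_smulL_left a x y := mul_assoc a x _
  innerL_smulC_left c x y := smul_mul_assoc c x _
  innerL_conj x y := by rw [star_mul, star_star]
  innerL_nonneg x := mul_star_self_nonneg x
  compat x y z := by
    rw [mul_assoc, StarAlgEquiv.apply_symm_apply]
  fullR := by
    apply dense_of_span_products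
    rintro w ⟨u, v, rfl⟩
    refine ⟨star (α u), α v, ?_⟩
    rw [star_star, ← map_mul, StarAlgEquiv.symm_apply_apply]
  fullL := by
    apply dense_of_span_products
    rintro w ⟨u, v, rfl⟩
    exact ⟨u, star v, by rw [star_star]⟩

variable {A}

/-- The value `\hat{T}_τ([X]) = Σ_i τ(⟨ξ_i, ξ_i⟩)` of a countable basis of a right Hilbert
module; for equivalence bimodules this computes the map `T` on the Picard group. -/
def bimValue (τ : TracialState A) (M : RightHilbertModule A E) (ξ : ℕ → E) : ℝ≥0∞ :=
  ∑' i, ENNReal.ofReal ((τ.toFun (M.inner (ξ i) (ξ i))).re)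

/-- `M₃` is the interior (relative) tensor product `M₁ ⊗_A M₂` of equivalence bimodules. -/
def IsRelTensor (M₁ : EquivalenceBimodule A E₁) (M₂ : EquivalenceBimodule A E₂)
    (M₃ : EquivalenceBimodule A E₃) : Prop :=
  ∃ β : E₁ → E₂ → E₃,
    (∀ x x' y, β (x + x') y = β x y + β x' y) ∧
    (∀ x y y', β x (y + y') = β x y + β x y') ∧
    (∀ (c : ℂ) x y, β (c • x) y = c • β x y) ∧
    (∀ x a y, β (M₁.smulR x a) y = β x (M₂.smulL a y)) ∧
    (∀ a x y, β (M₁.smulL a x) y = M₃.smulL a (β x y)) ∧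
    (∀ x y a, β x (M₂.smulR y a) = M₃.smulR (β x y) a) ∧
    (∀ x x' y y', M₃.inner (β x y) (β x' y') =
      M₂.inner y (M₂.smulL (M₁.inner x x') y')) ∧
    (∀ x x' y y', M₃.innerL (β x y) (β x' y') =
      M₁.innerL (M₁.smulR x (M₂.innerL y y')) x') ∧
    Dense (Submodule.span ℂ {z : E₃ | ∃ x y, z = β x y} : Set E₃)


end B2

/-!
Transport the left action along the right-module isomorphism `Φ : E ≃ A`. Since
`⟨x, y⟩_L · z = x · ⟨y, z⟩_R`, the element `⟨x, y⟩_L` acts through `Φ` as left multiplication by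
`Φ x (Φ y)*`, and such products span `A`; so every `c ∈ A` is implemented by some `s` in the span
of the left inner products. This `s` is unique because the left action is faithful (the left inner
product is full), and `c` is unique because `A` acts faithfully on itself. The map `c ↦ s` is an
injective *-homomorphism, hence isometric, and its range contains the dense span of the left inner
products, so it is an automorphism `α`; then `α ∘ Φ` is a bimodule isomorphism `E ≅ E_α^A`.
-/

lemma _root_.CStarRing.eq_zero_of_forall_mul_eq_zero {A : Type*} [NonUnitalNormedRing A]
    [StarRing A] [CStarRing A] {c : A} (h : ∀ b, c * b = 0) : c = 0 :=
  (CStarRing.mul_star_self_eq_zero_iff c).mp (h (star c))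

lemma _root_.NonUnitalStarAlgHom.surjective_of_denseRange {A B : Type*}
    [NonUnitalCStarAlgebra A] [NonUnitalCStarAlgebra B] (φ : A →⋆ₙₐ[ℂ] B)
    (hinj : Function.Injective φ) (hdense : DenseRange φ) : Function.Surjective φ := by
  have hclosed : IsClosed (Set.range φ) :=
    (NonUnitalStarAlgHom.isometry φ hinj).isClosedEmbedding.isClosed_range
  exact Set.range_eq_univ.mp (by rw [← hclosed.closure_eq, hdense.closure_range])

namespace EquivalenceBimodule

variable {A : Type*} [NonUnitalCStarAlgebra A] [PartialOrder A]
  {E : Type*} [NormedAddCommGroup E] [NormedSpace ℂ E] (M : EquivalenceBimodule A E)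

lemma zero_smulL (z : E) : M.smulL 0 z = 0 := by
  simpa using M.smulC_smulL 0 0 z

lemma innerL_zero_left (y : E) : M.innerL 0 y = 0 := by
  simpa using M.innerL_smulC_left 0 0 y

lemma eq_zero_of_forall_smulL_eq_zero {s : A} (h : ∀ z, M.smulL s z = 0) : s = 0 := by
  have hgen : Set.EqOn (ContinuousLinearMap.mul ℂ A s) (0 : A →L[ℂ] A)
      {a | ∃ x y, a = M.innerL x y} := by
    rintro _ ⟨x, y, rfl⟩
    simp [← M.innerL_smulL_left, h, innerL_zero_left]
  have hmul := ContinuousLinearMap.ext_on M.fullL hgen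
  exact CStarRing.eq_zero_of_forall_mul_eq_zero fun b => by simpa using congr($hmul b)

variable (Φ : E ≃ₗ[ℂ] A)

def leftActionGraph : Submodule ℂ (A × A) where
  carrier := {p | ∀ z, Φ (M.smulL p.1 z) = p.2 * Φ z}
  add_mem' {p q} hp hq z := by
    rw [Prod.fst_add, Prod.snd_add, M.add_smulL, map_add, hp z, hq z, add_mul]
  zero_mem' z := by
    rw [Prod.fst_zero, Prod.snd_zero, zero_smulL, map_zero, zero_mul]
  smul_mem' r p hp z := by
    rw [Prod.smul_fst, Prod.smul_snd, M.smulC_smulL, map_smul, hp z, smul_mul_assoc]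

variable {M Φ}

lemma mul_mem_leftActionGraph {s c t d : A} (h₁ : (s, c) ∈ M.leftActionGraph Φ)
    (h₂ : (t, d) ∈ M.leftActionGraph Φ) : (s * t, c * d) ∈ M.leftActionGraph Φ := by
  intro z
  rw [M.smulL_mul, h₁, h₂, mul_assoc]

lemma fst_eq_of_mem_leftActionGraph {s t c : A} (h₁ : (s, c) ∈ M.leftActionGraph Φ)
    (h₂ : (t, c) ∈ M.leftActionGraph Φ) : s = t := by
  have hsub : (s - t, 0) ∈ M.leftActionGraph Φ := by simpa using sub_mem h₁ h₂
  refine sub_eq_zero.mp (M.eq_zero_of_forall_smulL_eq_zero fun z => Φ.injective ?_)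
  simpa using hsub z

lemma snd_eq_of_mem_leftActionGraph {s c d : A} (h₁ : (s, c) ∈ M.leftActionGraph Φ)
    (h₂ : (s, d) ∈ M.leftActionGraph Φ) : c = d := by
  have hsub : (0, c - d) ∈ M.leftActionGraph Φ := by simpa using sub_mem h₁ h₂
  refine sub_eq_zero.mp (CStarRing.eq_zero_of_forall_mul_eq_zero fun b => ?_)
  simpa [zero_smulL] using (hsub (Φ.symm b)).symm

variable (M Φ) in
def innerLPairs : Submodule ℂ (A × A) :=
  Submodule.span ℂ {p | ∃ x y, p = (M.innerL x y, Φ x * star (Φ y))}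

lemma star_mem_innerLPairs {p : A × A} (hp : p ∈ M.innerLPairs Φ) :
    (star p.1, star p.2) ∈ M.innerLPairs Φ := by
  induction hp using Submodule.span_induction with
  | mem p hp =>
    obtain ⟨x, y, rfl⟩ := hp
    refine Submodule.subset_span ⟨y, x, ?_⟩
    rw [M.innerL_conj, star_mul, star_star]
  | zero =>
    simp only [Prod.fst_zero, Prod.snd_zero, star_zero, Prod.mk_zero_zero]
    exact zero_mem _
  | add p q _ _ hp hq => simpa using add_mem hp hq
  | smul r p _ hp => simpa using Submodule.smul_mem _ (star r) hp

lemma exists_mem_innerLPairs [StarOrderedRing A] (c : A) : ∃ s, (s, c) ∈ M.innerLPairs Φ := by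
  have hc : c ∈ Submodule.span ℂ {x : A | ∃ y z : A, x = y * z} := by
    rw [span_products_eq_top]; trivial
  have hsnd : Submodule.span ℂ {x : A | ∃ y z : A, x = y * z} ≤
      (M.innerLPairs Φ).map (LinearMap.snd ℂ A A) := by
    rw [innerLPairs, Submodule.map_span]
    refine Submodule.span_mono ?_
    rintro _ ⟨u, v, rfl⟩
    exact ⟨_, ⟨Φ.symm u, Φ.symm (star v), rfl⟩, by simp⟩
  obtain ⟨⟨s, c'⟩, hp, rfl⟩ := hsnd hc
  exact ⟨s, hp⟩

lemma fst_innerLPairs : (M.innerLPairs Φ).map (LinearMap.fst ℂ A A) =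
    Submodule.span ℂ {a : A | ∃ x y, a = M.innerL x y} := by
  rw [innerLPairs, Submodule.map_span]
  congr 1
  ext a
  simp [eq_comm]

lemma innerL_mem_leftActionGraph (hΦR : ∀ x a, Φ (M.smulR x a) = Φ x * a)
    (hΦI : ∀ x y, star (Φ x) * Φ y = M.inner x y) (x y : E) :
    (M.innerL x y, Φ x * star (Φ y)) ∈ M.leftActionGraph Φ := by
  intro z
  rw [M.compat, hΦR, ← hΦI, mul_assoc]

lemma innerLPairs_le_leftActionGraph (hΦR : ∀ x a, Φ (M.smulR x a) = Φ x * a)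
    (hΦI : ∀ x y, star (Φ x) * Φ y = M.inner x y) :
    M.innerLPairs Φ ≤ M.leftActionGraph Φ :=
  Submodule.span_le.mpr fun _ ⟨x, y, hp⟩ => hp ▸ innerL_mem_leftActionGraph hΦR hΦI x y

lemma exists_starAlgEquiv_mem_leftActionGraph [StarOrderedRing A]
    (hΦR : ∀ x a, Φ (M.smulR x a) = Φ x * a)
    (hΦI : ∀ x y, star (Φ x) * Φ y = M.inner x y) :
    ∃ α : A ≃⋆ₐ[ℂ] A, ∀ c, (α c, c) ∈ M.leftActionGraph Φ := by
  choose γ hγ using exists_mem_innerLPairs (M := M) (Φ := Φ)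
  have hG : ∀ c, (γ c, c) ∈ M.leftActionGraph Φ := fun c =>
    innerLPairs_le_leftActionGraph hΦR hΦI (hγ c)
  let γHom : A →⋆ₙₐ[ℂ] A :=
    { toFun := γ
      map_smul' := fun r c =>
        fst_eq_of_mem_leftActionGraph (hG _) (Submodule.smul_mem _ r (hG c))
      map_zero' := fst_eq_of_mem_leftActionGraph (hG 0) (Submodule.zero_mem _)
      map_add' := fun c d => fst_eq_of_mem_leftActionGraph (hG _) (add_mem (hG c) (hG d))
      map_mul' := fun c d =>
        fst_eq_of_mem_leftActionGraph (hG _) (mul_mem_leftActionGraph (hG c) (hG d))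
      map_star' := fun c => fst_eq_of_mem_leftActionGraph (hG _)
        (innerLPairs_le_leftActionGraph hΦR hΦI (star_mem_innerLPairs (hγ c))) }
  have hinj : Function.Injective γHom := by
    intro c d (hcd : γ c = γ d)
    exact snd_eq_of_mem_leftActionGraph (hG c) (hcd ▸ hG d)
  have hdense : DenseRange γHom := by
    refine M.fullL.mono ?_
    rw [← fst_innerLPairs]
    rintro _ ⟨⟨s, c⟩, hp, rfl⟩
    exact ⟨c, fst_eq_of_mem_leftActionGraph (hG c)
      (innerLPairs_le_leftActionGraph hΦR hΦI hp)⟩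
  exact ⟨.ofBijective γHom ⟨hinj, γHom.surjective_of_denseRange hinj hdense⟩, hG⟩

end EquivalenceBimodule

theorem equivBimodule_of_rightModuleIso_standard_general
    {A : Type u} [NonUnitalCStarAlgebra A] [PartialOrder A] [StarOrderedRing A]
    {E : Type v} [NormedAddCommGroup E] [NormedSpace ℂ E]
    (M : EquivalenceBimodule A E)
    (h : RightModuleIso M.toRightHilbertModule (standardRightModule A)) :
    ∃ α : A ≃⋆ₐ[ℂ] A, BimoduleIso M (Ealpha A α) := by
  obtain ⟨Φ, hΦR, hΦI⟩ := h
  obtain ⟨α, hα⟩ := M.exists_starAlgEquiv_mem_leftActionGraph hΦR hΦI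
  refine ⟨α, Φ.trans (α.toRingEquiv.toAddEquiv.toLinearEquiv (map_smul α)), ?_, ?_, ?_, ?_⟩
  · intro x a
    exact congrArg α (hΦR x a) |>.trans (map_mul α _ _)
  · intro a x
    obtain ⟨c, rfl⟩ := α.surjective a
    show α (Φ (M.smulL (α c) x)) = α c * α (Φ x)
    rw [hα c x, map_mul]
  · intro x y
    show α.symm (star (α (Φ x)) * α (Φ y)) = M.inner x y
    rw [← map_star, ← map_mul, α.symm_apply_apply]
    exact hΦI x y
  · intro x y
    show α (Φ x) * star (α (Φ y)) = M.innerL x y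
    rw [← map_star, ← map_mul]
    exact EquivalenceBimodule.fst_eq_of_mem_leftActionGraph (hα _)
      (EquivalenceBimodule.innerL_mem_leftActionGraph hΦR hΦI x y)

/-- **Proposition 2.1.**  If an `A`–`A`-equivalence bimodule `E` is isomorphic, as a right
Hilbert `A`-module, to the standard module `X_A`, then `E ≅ E_α^A` for some automorphism
`α` of `A`. -/
theorem equivBimodule_of_rightModuleIso_standard
    {A : Type u} [NonUnitalCStarAlgebra A] [PartialOrder A] [StarOrderedRing A]
    {E : Type v} [NormedAddCommGroup E] [NormedSpace ℂ E] [CompleteSpace E]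
    (M : EquivalenceBimodule A E)
    (h : RightModuleIso M.toRightHilbertModule (standardRightModule A)) :
    ∃ α : A ≃⋆ₐ[ℂ] A, BimoduleIso M (Ealpha A α) :=
  equivBimodule_of_rightModuleIso_standard_general M h

end Paper
end
end

section
/- Let A be a separable C*-algebra whose tracial state space T_1(A) is non-empty and compact, let {h_m} be a countable approximate unit for A, and let ε > 0. Then there exists N ∈ N such that for every m ≥ N and for every sequence (f_n) of positive contractions in A, max_{τ ∈ T_1(A)} |τ(f_n) − τ(h_m f_n)| < ε for all n. In particular, lim_{n→∞} max_{τ ∈ T_1(A)} |τ(h_n f_n) − τ(f_n)| = 0. -/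
/-!
For a tracial state `τ`, a positive contraction `f` and `m ≤ M`, traciality gives
`τ((h_M - h_m) f) = τ(k f k)` with `k = (h_M - h_m)^{1/2}`, which lies between `0` and
`τ(h_M - h_m) ≤ 1 - τ(h_m)`; letting `M → ∞` yields `0 ≤ τ(f) - τ(h_m f) ≤ 1 - τ(h_m)`, a bound
independent of `f`. By Cauchy–Schwarz `|τ(h_m a)|² ≤ τ(h_m) ‖a‖²`, so `τ(h_m) → ‖τ‖ = 1`, and the
functions `τ ↦ τ(h_m)` are weak-* continuous and increasing in `m`. Dini's theorem on the compact
set `T_1(A)` makes the convergence uniform.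
-/

open scoped MultiplierAlgebra Kronecker
open Filter Topology
open scoped ENNReal NNReal

set_option linter.unusedSectionVars false
set_option synthInstance.maxHeartbeats 1000000
set_option maxHeartbeats 1000000

noncomputable section

universe u v w

namespace Paper
/-! ### Tracial states as a weak-* compact set, central sequences -/

section BTS
variable {A : Type u} [NonUnitalCStarAlgebra A] [PartialOrder A] [StarOrderedRing A]


variable (A) in
/-- The tracial state space `T_1(A)` inside the weak-* dual. -/
def tracialStateSet : Set (WeakDual ℂ A) :=
  {φ | (∀ a b : A, φ (a * b) = φ (b * a)) ∧
    (∀ a : A, 0 ≤ a → 0 ≤ (φ a).re ∧ (φ a).im = 0) ∧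
    ‖WeakDual.toStrongDual φ‖ = 1}

/-- A norm-central sequence in `A`. -/
def IsCentralSeq (f : ℕ → A) : Prop :=
  ∀ a : A, Tendsto (fun n => ‖f n * a - a * f n‖) atTop (𝓝 0)

/-- Real powers of a positive element, via the non-unital continuous functional calculus. -/
def cpow (a : A) (r : ℝ) : A := cfcₙ (fun t : ℝ => t ^ r) a

/-- The canonical extension of a (tracial) state to the unitization. -/
def extendTrace (φ : WeakDual ℂ A) (x : Unitization ℂ A) : ℂ := φ x.snd + x.fst

/-- The pair of central sequences appearing in the definition of excision in small central
sequences and of property (SI): `(e_n)` is a positive central sequence which is small in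
trace, `(f_n)` is a positive central sequence with `lim_m liminf_n min_τ τ(f_n^m) > 0`. -/
def SmallTracePair (e f : ℕ → A) : Prop :=
  IsCentralSeq e ∧ (∀ n, 0 ≤ e n ∧ ‖e n‖ ≤ 1) ∧
  IsCentralSeq f ∧ (∀ n, 0 ≤ f n ∧ ‖f n‖ ≤ 1) ∧
  Tendsto (fun n => sSup ((fun φ : WeakDual ℂ A => (φ (e n)).re) '' tracialStateSet A))
    atTop (𝓝 0) ∧
  ∃ L : ℝ, 0 < L ∧
    Tendsto (fun m : ℕ =>
        Filter.liminf (fun n =>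
          sInf ((fun φ : WeakDual ℂ A => (φ (cpow (f n) (m : ℝ))).re) '' tracialStateSet A))
          atTop)
      atTop (𝓝 L)

/-- A completely positive map `φ : Ã → Ã` can be excised in small central sequences. -/
def CanBeExcised (φ : Unitization ℂ A →ₗ[ℂ] Unitization ℂ A) : Prop :=
  ∀ e f : ℕ → A, SmallTracePair e f →
    ∃ s : ℕ → A,
      (∀ x : Unitization ℂ A,
        Tendsto (fun n => ‖star ((s n : Unitization ℂ A)) * x * ((s n : Unitization ℂ A)) -
          φ x * ((e n : Unitization ℂ A))‖) atTop (𝓝 0)) ∧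
      Tendsto (fun n => ‖f n * s n - s n‖) atTop (𝓝 0)


end BTS

end Paper

open scoped ComplexOrder

section CStarAlgebra

variable {A : Type*} [NonUnitalCStarAlgebra A] [PartialOrder A] [StarOrderedRing A]

lemma CStarAlgebra.star_left_conjugate_le_star_mul_self {a b : A} (hb : IsSelfAdjoint b)
    (hb₁ : ‖b‖ ≤ 1) : star a * b * a ≤ star a * a :=
  (star_left_conjugate_le_norm_smul hb).trans (smul_le_of_le_one_left (star_mul_self_nonneg a) hb₁)

lemma CStarAlgebra.mul_self_le_self {e : A} (he : 0 ≤ e) (he₁ : ‖e‖ ≤ 1) : e * e ≤ e := by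
  obtain ⟨s, hs, rfl⟩ : ∃ s : A, 0 ≤ s ∧ s * s = e :=
    ⟨CFC.sqrt e, CFC.sqrt_nonneg e, CFC.sqrt_mul_sqrt_self e he⟩
  have hconj := star_left_conjugate_le_star_mul_self (a := s) (IsSelfAdjoint.of_nonneg he) he₁
  rwa [(IsSelfAdjoint.of_nonneg hs).star_eq, ← mul_assoc, mul_assoc _ s] at hconj

end CStarAlgebra

namespace PositiveLinearMap

variable {A : Type*} [NonUnitalCStarAlgebra A] [PartialOrder A] [StarOrderedRing A]
  (f : A →ₚ[ℂ] ℂ)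

lemma norm_apply_star_mul_sq_le (a b : A) :
    ‖f (star a * b)‖ ^ 2 ≤ (f (star a * a)).re * (f (star b * b)).re := by
  have hcs := pow_le_pow_left₀ (norm_nonneg _)
    (norm_inner_le_norm (𝕜 := ℂ) (f.toPreGNS a) (f.toPreGNS b)) 2
  rw [mul_pow, preGNS_norm_def, preGNS_norm_def, Real.sq_sqrt, Real.sq_sqrt] at hcs
  · exact hcs
  all_goals exact (Complex.nonneg_iff.1 (f.map_nonneg (star_mul_self_nonneg _))).1

end PositiveLinearMap

namespace ContinuousLinearMap

variable {A : Type*} [NonUnitalCStarAlgebra A] [PartialOrder A] [StarOrderedRing A]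
  {φ : StrongDual ℂ A} (hφ : ∀ a, 0 ≤ a → 0 ≤ φ a)
include hφ

lemma monotone_of_apply_nonneg : Monotone φ :=
  (PositiveLinearMap.mk₀ φ.toLinearMap hφ).monotone'

lemma apply_le_one_of_nonneg (hφ₁ : ‖φ‖ ≤ 1) {e : A} (he : 0 ≤ e) (he₁ : ‖e‖ ≤ 1) :
    φ e ≤ 1 := by
  have hnorm : ‖φ e‖ ≤ 1 := (φ.le_opNorm e).trans (mul_le_one₀ hφ₁ (norm_nonneg e) he₁)
  rw [← Complex.norm_of_nonneg' (hφ e he)]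
  exact_mod_cast hnorm

lemma norm_apply_mul_sq_le_of_nonneg (hφ₁ : ‖φ‖ ≤ 1) {e : A} (he : 0 ≤ e) (he₁ : ‖e‖ ≤ 1)
    (a : A) : ‖φ (e * a)‖ ^ 2 ≤ (φ e).re * ‖a‖ ^ 2 := by
  have hcs := (PositiveLinearMap.mk₀ φ.toLinearMap hφ).norm_apply_star_mul_sq_le e a
  simp only [PositiveLinearMap.mk₀, (IsSelfAdjoint.of_nonneg he).star_eq] at hcs
  have hee : (φ (e * e)).re ≤ (φ e).re :=
    (Complex.le_def.1 (monotone_of_apply_nonneg hφ (CStarAlgebra.mul_self_le_self he he₁))).1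
  have haa : (φ (star a * a)).re ≤ ‖a‖ ^ 2 := by
    refine (Complex.re_le_norm _).trans ?_
    simpa [CStarRing.norm_star_mul_self, sq] using
      (φ.le_opNorm (star a * a)).trans (mul_le_of_le_one_left (norm_nonneg _) hφ₁)
  exact hcs.trans <| mul_le_mul hee haa (Complex.nonneg_iff.1 (hφ _ (star_mul_self_nonneg a))).1
    (Complex.nonneg_iff.1 (hφ e he)).1

lemma tendsto_re_apply_of_norm_eq_one (hφ₁ : ‖φ‖ = 1) {ι : Type*} {l : Filter ι} {h : ι → A}
    (hpos : ∀ i, 0 ≤ h i ∧ ‖h i‖ ≤ 1) (happrox : ∀ a, Tendsto (fun i => h i * a) l (𝓝 a)) :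
    Tendsto (fun i => (φ (h i)).re) l (𝓝 1) := by
  refine tendsto_order.2 ⟨fun b hb => ?_, fun b hb => Eventually.of_forall fun i => ?_⟩
  · obtain ⟨a, ha, hba⟩ := φ.exists_lt_apply_of_lt_opNorm (r := √b)
      (by rwa [hφ₁, Real.sqrt_lt' one_pos, one_pow])
    have hb' : b < ‖φ a‖ ^ 2 := (Real.sqrt_lt' ((Real.sqrt_nonneg b).trans_lt hba)).1 hba
    have hlim := (((φ.continuous.tendsto a).comp (happrox a)).norm.pow 2).eventually
      (lt_mem_nhds hb')
    filter_upwards [hlim] with i hi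
    have hre₀ : 0 ≤ (φ (h i)).re := (Complex.nonneg_iff.1 (hφ _ (hpos i).1)).1
    calc b < ‖φ (h i * a)‖ ^ 2 := hi
      _ ≤ (φ (h i)).re * ‖a‖ ^ 2 :=
        norm_apply_mul_sq_le_of_nonneg hφ hφ₁.le (hpos i).1 (hpos i).2 a
      _ ≤ (φ (h i)).re := mul_le_of_le_one_right hre₀ (pow_le_one₀ (norm_nonneg a) ha.le)
  · exact (Complex.le_def.1 (apply_le_one_of_nonneg hφ hφ₁.le (hpos i).1 (hpos i).2)).1.trans_lt hb

lemma apply_mul_mem_Icc_of_trace (htr : ∀ a b, φ (a * b) = φ (b * a)) {k x : A} (hk : 0 ≤ k)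
    (hx : 0 ≤ x) (hx₁ : ‖x‖ ≤ 1) : φ (k * x) ∈ Set.Icc 0 (φ k) := by
  obtain ⟨s, hs, rfl⟩ : ∃ s : A, 0 ≤ s ∧ s * s = k :=
    ⟨CFC.sqrt k, CFC.sqrt_nonneg k, CFC.sqrt_mul_sqrt_self k hk⟩
  have hss : star s = s := (IsSelfAdjoint.of_nonneg hs).star_eq
  have hconj : φ (s * s * x) = φ (star s * x * s) := by rw [hss, mul_assoc, htr, mul_assoc]
  rw [hconj]
  refine ⟨hφ _ (star_left_conjugate_nonneg hx s), monotone_of_apply_nonneg hφ ?_⟩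
  simpa [hss] using
    CStarAlgebra.star_left_conjugate_le_star_mul_self (a := s) (IsSelfAdjoint.of_nonneg hx) hx₁

lemma sub_apply_mul_mem_Icc_of_trace (hφ₁ : ‖φ‖ ≤ 1) (htr : ∀ a b, φ (a * b) = φ (b * a))
    {ι : Type*} [Preorder ι] [IsDirectedOrder ι] [Nonempty ι] {h : ι → A}
    (hpos : ∀ i, 0 ≤ h i ∧ ‖h i‖ ≤ 1) (hmono : Monotone h)
    (happrox : ∀ a, Tendsto (fun i => h i * a) atTop (𝓝 a)) {x : A} (hx : 0 ≤ x) (hx₁ : ‖x‖ ≤ 1)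
    (i : ι) : φ x - φ (h i * x) ∈ Set.Icc 0 (1 - φ (h i)) := by
  have hlim : Tendsto (fun j => φ (h j * x) - φ (h i * x)) atTop (𝓝 (φ x - φ (h i * x))) :=
    ((φ.continuous.tendsto x).comp (happrox x)).sub_const _
  refine isClosed_Icc.mem_of_tendsto hlim ?_
  filter_upwards [eventually_ge_atTop i] with j hij
  have hmem := apply_mul_mem_Icc_of_trace hφ htr (sub_nonneg.2 (hmono hij)) hx hx₁
  rw [sub_mul, map_sub, map_sub] at hmem
  exact ⟨hmem.1, hmem.2.trans <|
    sub_le_sub_right (apply_le_one_of_nonneg hφ hφ₁ (hpos j).1 (hpos j).2) _⟩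

end ContinuousLinearMap

namespace Paper

variable {A : Type u} [NonUnitalCStarAlgebra A] [PartialOrder A] [StarOrderedRing A]

lemma apply_nonneg_of_mem_tracialStateSet {φ : WeakDual ℂ A} (hφ : φ ∈ tracialStateSet A) {a : A}
    (ha : 0 ≤ a) : 0 ≤ φ a :=
  Complex.nonneg_iff.2 ⟨(hφ.2.1 a ha).1, (hφ.2.1 a ha).2.symm⟩

section ApproximateUnit

variable {ι : Type*} [Preorder ι] {h : ι → A} (hpos : ∀ i, 0 ≤ h i ∧ ‖h i‖ ≤ 1)
  (hmono : Monotone h) (happrox : ∀ a, Tendsto (fun i => h i * a) atTop (𝓝 a))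
include hpos hmono happrox

lemma tendstoUniformlyOn_re_apply_tracialStateSet (hcomp : IsCompact (tracialStateSet A)) :
    TendstoUniformlyOn (fun i (φ : WeakDual ℂ A) => (φ (h i)).re) 1 atTop (tracialStateSet A) :=
  Monotone.tendstoUniformlyOn_of_forall_tendsto hcomp
    (fun i => (Complex.continuous_re.comp (WeakDual.eval_continuous (h i))).continuousOn)
    (fun _ hφ _ _ hij => (Complex.le_def.1 <| (WeakDual.toStrongDual _).monotone_of_apply_nonneg
      (fun _ => apply_nonneg_of_mem_tracialStateSet hφ) (hmono hij)).1)
    continuousOn_const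
    (fun _ hφ => (WeakDual.toStrongDual _).tendsto_re_apply_of_norm_eq_one
      (fun _ => apply_nonneg_of_mem_tracialStateSet hφ) hφ.2.2 hpos happrox)

variable [IsDirectedOrder ι] [Nonempty ι]

lemma norm_sub_apply_mul_le_of_mem_tracialStateSet {φ : WeakDual ℂ A}
    (hφ : φ ∈ tracialStateSet A) {x : A} (hx : 0 ≤ x) (hx₁ : ‖x‖ ≤ 1) (i : ι) :
    ‖φ x - φ (h i * x)‖ ≤ 1 - (φ (h i)).re := by
  obtain ⟨h₀, h₁⟩ : φ x - φ (h i * x) ∈ Set.Icc 0 (1 - φ (h i)) :=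
    (WeakDual.toStrongDual φ).sub_apply_mul_mem_Icc_of_trace
      (fun _ => apply_nonneg_of_mem_tracialStateSet hφ) hφ.2.2.le hφ.1 hpos hmono happrox hx hx₁ i
  rw [← Complex.re_eq_norm.2 h₀]
  simpa using (Complex.le_def.1 h₁).1

lemma eventually_norm_sub_apply_mul_lt (hcomp : IsCompact (tracialStateSet A)) {ε : ℝ}
    (hε : 0 < ε) :
    ∀ᶠ i in atTop, ∀ x : A, 0 ≤ x → ‖x‖ ≤ 1 →
      ∀ φ ∈ tracialStateSet A, ‖φ x - φ (h i * x)‖ < ε := by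
  filter_upwards [Metric.tendstoUniformlyOn_iff.1
    (tendstoUniformlyOn_re_apply_tracialStateSet hpos hmono happrox hcomp) ε hε]
    with i hi x hx hx₁ φ hφ
  exact (norm_sub_apply_mul_le_of_mem_tracialStateSet hpos hmono happrox hφ hx hx₁ i).trans_lt
    (abs_sub_lt_iff.1 (hi φ hφ)).1

end ApproximateUnit

theorem approximate_unit_trace_uniform_general
    {A : Type u} [NonUnitalCStarAlgebra A] [PartialOrder A] [StarOrderedRing A]
    (hcomp : IsCompact (tracialStateSet A))
    (h : ℕ → A) (hpos : ∀ m, 0 ≤ h m ∧ ‖h m‖ ≤ 1) (hmono : Monotone h)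
    (happrox : ∀ a : A, Tendsto (fun m => h m * a) atTop (𝓝 a)) :
    (∀ ε : ℝ, 0 < ε → ∃ N : ℕ, ∀ m ≥ N, ∀ f : ℕ → A, (∀ n, 0 ≤ f n ∧ ‖f n‖ ≤ 1) →
      ∀ n : ℕ, ∀ φ ∈ tracialStateSet A, ‖φ (f n) - φ (h m * f n)‖ < ε) ∧
    ∀ f : ℕ → A, (∀ n, 0 ≤ f n ∧ ‖f n‖ ≤ 1) →
      Tendsto (fun n => sSup ((fun φ : WeakDual ℂ A =>
        ‖φ (h n * f n) - φ (f n)‖) '' tracialStateSet A)) atTop (𝓝 0) := by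
  refine ⟨fun ε hε => ?_, fun f hf => tendsto_order.2 ⟨fun b hb => ?_, fun b hb => ?_⟩⟩
  · obtain ⟨N, hN⟩ :=
      eventually_atTop.1 (eventually_norm_sub_apply_mul_lt hpos hmono happrox hcomp hε)
    exact ⟨N, fun m hm f hf n => hN m hm (f n) (hf n).1 (hf n).2⟩
  · refine Eventually.of_forall fun n => hb.trans_le (Real.sSup_nonneg ?_)
    rintro _ ⟨φ, -, rfl⟩
    positivity
  · filter_upwards [eventually_norm_sub_apply_mul_lt hpos hmono happrox hcomp (half_pos hb)]
      with n hn
    refine (Real.sSup_le ?_ (half_pos hb).le).trans_lt (half_lt_self hb)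
    rintro _ ⟨φ, hφ, rfl⟩
    exact (norm_sub_rev _ _).trans_le (hn (f n) (hf n).1 (hf n).2 φ hφ).le

/-- **Proposition 5.3.**  Let `A` be separable with non-empty compact tracial state space,
and let `(h_m)` be a countable approximate unit for `A`.  For every `ε > 0` there is `N`
such that for all `m ≥ N` and every sequence `(f_n)` of positive contractions,
`max_τ |τ(f_n) - τ(h_m f_n)| < ε` for all `n`; in particular
`lim_n max_τ |τ(h_n f_n) - τ(f_n)| = 0`. -/
theorem approximate_unit_trace_uniform
    {A : Type u} [NonUnitalCStarAlgebra A] [PartialOrder A] [StarOrderedRing A]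
    (hsep : TopologicalSpace.SeparableSpace A)
    (hne : (tracialStateSet A).Nonempty) (hcomp : IsCompact (tracialStateSet A))
    (h : ℕ → A) (hpos : ∀ m, 0 ≤ h m ∧ ‖h m‖ ≤ 1) (hmono : Monotone h)
    (happrox : ∀ a : A, Tendsto (fun m => h m * a) atTop (𝓝 a)) :
    (∀ ε : ℝ, 0 < ε → ∃ N : ℕ, ∀ m ≥ N, ∀ f : ℕ → A, (∀ n, 0 ≤ f n ∧ ‖f n‖ ≤ 1) →
      ∀ n : ℕ, ∀ φ ∈ tracialStateSet A, ‖φ (f n) - φ (h m * f n)‖ < ε) ∧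
    ∀ f : ℕ → A, (∀ n, 0 ≤ f n ∧ ‖f n‖ ≤ 1) →
      Tendsto (fun n => sSup ((fun φ : WeakDual ℂ A =>
        ‖φ (h n * f n) - φ (f n)‖) '' tracialStateSet A)) atTop (𝓝 0) :=
  approximate_unit_trace_uniform_general hcomp h hpos hmono happrox

end Paper
end
end

section
/- Let A be a separable C*-algebra whose tracial state space T_1(A) is non-empty and compact, let c be a positive element in A and θ ∈ R. Then for every central sequence (f_n) of positive contractions in A, limsup_{n→∞} max_{τ ∈ T_1(A)} |τ(c f_n) − θ τ(f_n)| ≤ 2 max_{τ ∈ T_1(A)} |τ(c) − θ|. -/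
open scoped MultiplierAlgebra Kronecker
open Filter Topology
open scoped ENNReal NNReal

set_option linter.unusedSectionVars false
set_option synthInstance.maxHeartbeats 1000000
set_option maxHeartbeats 1000000

noncomputable section

universe u v w

/-!
Choose traces `τₙ` at which the maximum defining the left-hand side is attained and pass to the
limit along an ultrafilter: `τₙ → τ`, `τₙ(· fₙ) → σ` weak-* and `τₙ(fₙ) → μ`. Centrality of
`(fₙ)` makes `σ` tracial. The tracial Cauchy–Schwarz bounds `|τ(a g)| ≤ ‖a‖ τ(g)` and (applied in
the unitization to `1 - g`) `|τ(a) - τ(a g)| ≤ ‖a‖ (1 - τ(g))` give `‖σ‖ ≤ μ ≤ ‖σ‖`, so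
`σ = μ ρ` for a tracial state `ρ`, and the limit of `|τₙ(c fₙ) - θ τₙ(fₙ)|` is
`|σ(c) - θ μ| = μ |ρ(c) - θ| ≤ max_τ |τ(c) - θ|`.
-/

theorem IsCompact.exists_tendsto_ultrafilter {X ι : Type*} [TopologicalSpace X] {s : Set X}
    (hs : IsCompact s) (U : Ultrafilter ι) {u : ι → X} (hu : ∀ i, u i ∈ s) :
    ∃ x ∈ s, Tendsto u U (𝓝 x) :=
  hs.ultrafilter_le_nhds' (U.map u) (Ultrafilter.mem_map.mpr (Filter.univ_mem' hu))

theorem Filter.limsup_le_of_forall_ultrafilter {ι : Type*} {l : Filter ι} {u : ι → ℝ} {M : ℝ}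
    (hu : IsCoboundedUnder (· ≤ ·) l u)
    (h : ∀ U : Ultrafilter ι, ↑U ≤ l → ∃ L ≤ M, Tendsto u U (𝓝 L)) :
    limsup u l ≤ M := by
  refine le_of_forall_pos_le_add fun ε hε => limsup_le_of_le hu ?_
  by_contra h_freq
  rw [not_eventually, frequently_iff_neBot] at h_freq
  let U := Ultrafilter.of (l ⊓ 𝓟 {i | ¬u i ≤ M + ε})
  obtain ⟨L, hLM, hL⟩ := h U ((Ultrafilter.of_le _).trans inf_le_left)
  have h_gt : ∀ᶠ i in U, M + ε ≤ u i :=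
    ((Ultrafilter.of_le _).trans inf_le_right) (fun i (hi : ¬u i ≤ M + ε) => (not_le.mp hi).le)
  linarith [ge_of_tendsto hL h_gt]

open scoped ComplexOrder InnerProductSpace

section Tracial
variable {B : Type*} [NonUnitalCStarAlgebra B] [PartialOrder B] [StarOrderedRing B]

theorem PositiveLinearMap.norm_apply_mul_le_of_tracial (ω : B →ₚ[ℂ] ℂ)
    (hω : ∀ x y, ω (x * y) = ω (y * x)) (a : B) {g : B} (hg : 0 ≤ g) :
    ‖ω (a * g)‖ ≤ ‖a‖ * (ω g).re := by
  set r := CFC.sqrt g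
  have hr : star r = r := (CFC.sqrt_nonneg g).isSelfAdjoint.star_eq
  have hrr : r * r = g := CFC.sqrt_mul_sqrt_self g hg
  have h_inner : ω (a * g) = ⟪ω.toPreGNS r, ω.toPreGNS (a * r)⟫_ℂ := by
    rw [PositiveLinearMap.preGNS_inner_def]
    simp only [PositiveLinearMap.ofPreGNS_toPreGNS, hr]
    rw [← hrr, ← mul_assoc, hω]
  have h_norm : ‖ω.toPreGNS r‖ ^ 2 = (ω g).re := by
    have := PositiveLinearMap.preGNS_norm_sq ω (ω.toPreGNS r)
    simp only [PositiveLinearMap.ofPreGNS_toPreGNS, hr, hrr] at this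
    rw [← this, ← Complex.ofReal_pow, Complex.ofReal_re]
  have h_mul : ‖ω.toPreGNS (a * r)‖ ≤ ‖a‖ * ‖ω.toPreGNS r‖ :=
    calc ‖ω.toPreGNS (a * r)‖ = ‖ω.leftMulMapPreGNS a (ω.toPreGNS r)‖ := rfl
      _ ≤ ‖ω.leftMulMapPreGNS a‖ * ‖ω.toPreGNS r‖ := ContinuousLinearMap.le_opNorm _ _
      _ ≤ ‖a‖ * ‖ω.toPreGNS r‖ := by
        gcongr; exact LinearMap.mkContinuous_norm_le _ (norm_nonneg a) _
  calc ‖ω (a * g)‖ ≤ ‖ω.toPreGNS r‖ * ‖ω.toPreGNS (a * r)‖ := h_inner ▸ norm_inner_le_norm _ _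
    _ ≤ ‖ω.toPreGNS r‖ * (‖a‖ * ‖ω.toPreGNS r‖) := by gcongr
    _ = ‖a‖ * (ω g).re := by rw [← h_norm]; ring

end Tracial

namespace Paper

section WeakDual
variable {E : Type*} [NormedAddCommGroup E] [NormedSpace ℂ E]

theorem norm_toStrongDual_eq_of_le {T S : WeakDual ℂ E} {μ : ℝ}
    (hT : ‖WeakDual.toStrongDual T‖ = 1) (hμ : μ ∈ Set.Icc 0 1) (hS : ∀ a, ‖S a‖ ≤ ‖a‖ * μ)
    (hTS : ∀ a, ‖T a - S a‖ ≤ ‖a‖ * (1 - μ)) :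
    ‖WeakDual.toStrongDual S‖ = μ := by
  refine le_antisymm (ContinuousLinearMap.opNorm_le_bound _ hμ.1 fun a => ?_) ?_
  · rw [mul_comm]
    exact hS a
  have hT_le : ‖WeakDual.toStrongDual T‖ ≤ ‖WeakDual.toStrongDual S‖ + (1 - μ) := by
    have h_nonneg : 0 ≤ ‖WeakDual.toStrongDual S‖ + (1 - μ) := by
      linarith [norm_nonneg (WeakDual.toStrongDual S), hμ.2]
    refine ContinuousLinearMap.opNorm_le_bound _ h_nonneg fun a => ?_
    calc ‖T a‖ ≤ ‖S a‖ + ‖T a - S a‖ := norm_le_norm_add_norm_sub' _ _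
      _ ≤ ‖WeakDual.toStrongDual S‖ * ‖a‖ + ‖a‖ * (1 - μ) :=
        add_le_add ((WeakDual.toStrongDual S).le_opNorm a) (hTS a)
      _ = _ := by ring
  linarith

end WeakDual

section MulRight
variable {A : Type*} [NonUnitalCStarAlgebra A]

def mulRight (φ : WeakDual ℂ A) (g : A) : WeakDual ℂ A :=
  StrongDual.toWeakDual ((WeakDual.toStrongDual φ).comp ((ContinuousLinearMap.mul ℂ A).flip g))

end MulRight

section TracialState
variable {A : Type*} [NonUnitalCStarAlgebra A] [PartialOrder A] [StarOrderedRing A]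
  {φ : WeakDual ℂ A}

theorem mem_tracialStateSet_iff : φ ∈ tracialStateSet A ↔
    (∀ a b, φ (a * b) = φ (b * a)) ∧ (∀ a, 0 ≤ a → 0 ≤ φ a) ∧
      ‖WeakDual.toStrongDual φ‖ = 1 := by
  simp only [tracialStateSet, Set.mem_ofPred_eq, Complex.nonneg_iff, eq_comm (a := (0 : ℝ))]

namespace tracialStateSet

theorem norm_apply_le (hφ : φ ∈ tracialStateSet A) (x : A) : ‖φ x‖ ≤ ‖x‖ := by
  simpa [hφ.2.2] using (WeakDual.toStrongDual φ).le_opNorm x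

theorem apply_nonneg (hφ : φ ∈ tracialStateSet A) {a : A} (ha : 0 ≤ a) : 0 ≤ φ a :=
  (mem_tracialStateSet_iff.mp hφ).2.1 a ha

def toPositiveLinearMap (hφ : φ ∈ tracialStateSet A) : A →ₚ[ℂ] ℂ :=
  .mk₀ (WeakDual.toStrongDual φ).toLinearMap fun _ => apply_nonneg hφ

theorem norm_mulRight_le (hφ : φ ∈ tracialStateSet A) {g : A} (hg1 : ‖g‖ ≤ 1) :
    ‖WeakDual.toStrongDual (mulRight φ g)‖ ≤ 1 :=
  ContinuousLinearMap.opNorm_le_bound _ zero_le_one fun a =>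
    calc ‖φ (a * g)‖ ≤ ‖a * g‖ := norm_apply_le hφ _
      _ ≤ ‖a‖ * ‖g‖ := norm_mul_le _ _
      _ ≤ 1 * ‖a‖ := by rw [one_mul]; exact mul_le_of_le_one_right (norm_nonneg a) hg1

end tracialStateSet

theorem extendTrace_nonneg (hφ : φ ∈ tracialStateSet A) {x : Unitization ℂ A} (hx : 0 ≤ x) :
    0 ≤ extendTrace φ x := by
  let fst : Unitization ℂ A →⋆ₐ[ℂ] ℂ :=
    { Unitization.fstHom ℂ A with map_star' := Unitization.fst_star }
  obtain ⟨r, hr, hfst⟩ := RCLike.nonneg_iff_exists_ofReal.mp (map_nonneg fst hx)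
  replace hfst : x.fst = r := hfst.symm
  set a := x.snd
  -- `x = r + a` with `x ≥ 0` puts the quasispectrum of `a` above `-r`, so `‖a⁻‖ ≤ r`.
  have hx_eq : x = algebraMap ℝ (Unitization ℂ A) r + a := by
    rw [Unitization.algebraMap_eq_inl_comp, Function.comp_apply, Complex.coe_algebraMap, ← hfst]
    exact (Unitization.inl_fst_add_inr_snd_eq x).symm
  have ha : IsSelfAdjoint a :=
    (Unitization.snd_star x).symm.trans congr(($(hx.isSelfAdjoint.star_eq)).snd)
  have h_spec : ∀ t ∈ quasispectrum ℝ a, -r ≤ t := by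
    rw [Unitization.quasispectrum_eq_spectrum_inr' ℝ ℂ]
    refine (algebraMap_le_iff_le_spectrum (a := (a : Unitization ℂ A)) (ha.inr ℂ)).mp ?_
    rw [map_neg, neg_le_iff_add_nonneg', ← hx_eq]
    exact hx
  have h_neg : ‖a⁻‖ ≤ r := by
    rw [CFC.negPart_def]
    refine norm_cfcₙ_le fun t ht => ?_
    rw [Real.norm_of_nonneg (negPart_nonneg t), negPart_def]
    exact max_le (by linarith [h_spec t ht]) hr
  have h_neg' : φ a⁻ ≤ r := by
    rw [← Complex.norm_of_nonneg' (tracialStateSet.apply_nonneg hφ (CFC.negPart_nonneg a))]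
    exact_mod_cast (tracialStateSet.norm_apply_le hφ _).trans h_neg
  have h_pos := tracialStateSet.apply_nonneg hφ (CFC.posPart_nonneg a)
  rw [extendTrace, hfst, show x.snd = a from rfl, ← CFC.posPart_sub_negPart a ha, map_sub]
  linear_combination h_pos + h_neg'

theorem extendTrace_mul_comm (hφ : φ ∈ tracialStateSet A) (x y : Unitization ℂ A) :
    extendTrace φ (x * y) = extendTrace φ (y * x) := by
  simp only [extendTrace, Unitization.fst_mul, Unitization.snd_mul, map_add, map_smul,
    smul_eq_mul, hφ.1 x.snd y.snd]
  ring

namespace tracialStateSet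

def toUnitizationPositiveLinearMap (hφ : φ ∈ tracialStateSet A) : Unitization ℂ A →ₚ[ℂ] ℂ :=
  .mk₀
    { toFun := extendTrace φ
      map_add' x y := by
        simp only [extendTrace, Unitization.fst_add, Unitization.snd_add, map_add]
        ring
      map_smul' t x := by
        simp only [extendTrace, Unitization.fst_smul, Unitization.snd_smul, map_smul, smul_eq_mul,
          RingHom.id_apply]
        ring }
    fun _ => extendTrace_nonneg hφ

@[simp]
theorem toUnitizationPositiveLinearMap_apply (hφ : φ ∈ tracialStateSet A) (x : Unitization ℂ A) :
    toUnitizationPositiveLinearMap hφ x = extendTrace φ x :=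
  rfl

theorem norm_apply_mul_le (hφ : φ ∈ tracialStateSet A) (a : A) {g : A} (hg : 0 ≤ g) :
    ‖φ (a * g)‖ ≤ ‖a‖ * (φ g).re :=
  (toPositiveLinearMap hφ).norm_apply_mul_le_of_tracial hφ.1 a hg

theorem norm_apply_sub_apply_mul_le (hφ : φ ∈ tracialStateSet A) (a : A) {g : A} (hg : 0 ≤ g)
    (hg1 : ‖g‖ ≤ 1) : ‖φ a - φ (a * g)‖ ≤ ‖a‖ * (1 - (φ g).re) := by
  have h_le_one : (g : Unitization ℂ A) ≤ 1 :=
    (CStarAlgebra.mem_Icc_iff_norm_le_one.mpr ⟨by simpa using hg, by rwa [Unitization.norm_inr]⟩).2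
  have key := (toUnitizationPositiveLinearMap hφ).norm_apply_mul_le_of_tracial
    (extendTrace_mul_comm hφ) a (sub_nonneg.mpr h_le_one)
  simpa [extendTrace, mul_sub, ← Unitization.inr_mul, sub_eq_add_neg, Unitization.norm_inr,
    add_comm] using key

theorem apply_mul_nonneg (hφ : φ ∈ tracialStateSet A) {a g : A} (ha : 0 ≤ a) (hg : 0 ≤ g) :
    0 ≤ φ (a * g) := by
  rw [← CFC.sqrt_mul_sqrt_self g hg, ← mul_assoc, hφ.1, ← mul_assoc]
  exact apply_nonneg hφ (conjugate_nonneg_of_nonneg ha (CFC.sqrt_nonneg g))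

end tracialStateSet

theorem exists_mem_tracialStateSet_eq_mul {T S : WeakDual ℂ A} {μ : ℝ}
    (hT : T ∈ tracialStateSet A) (hS_comm : ∀ a b, S (a * b) = S (b * a))
    (hS_nonneg : ∀ a, 0 ≤ a → 0 ≤ S a) (hμ : μ ∈ Set.Icc 0 1) (hS : ∀ a, ‖S a‖ ≤ ‖a‖ * μ)
    (hTS : ∀ a, ‖T a - S a‖ ≤ ‖a‖ * (1 - μ)) :
    ∃ ρ ∈ tracialStateSet A, ∀ a, S a = μ * ρ a := by
  rcases hμ.1.eq_or_lt with rfl | hμ_pos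
  · exact ⟨T, hT, fun a => by simpa using hS a⟩
  have h_apply : ∀ a, (((μ : ℂ)⁻¹) • S) a = (μ : ℂ)⁻¹ * S a := fun _ => rfl
  refine ⟨((μ : ℂ)⁻¹) • S, mem_tracialStateSet_iff.mpr ⟨fun a b => ?_, fun a ha => ?_, ?_⟩,
    fun a => ?_⟩
  · rw [h_apply, h_apply, hS_comm]
  · rw [h_apply]
    exact mul_nonneg (by exact_mod_cast (inv_pos.mpr hμ_pos).le) (hS_nonneg a ha)
  · rw [map_smul, norm_smul, norm_toStrongDual_eq_of_le hT.2.2 hμ hS hTS, norm_inv,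
      Complex.norm_real, Real.norm_of_nonneg hμ.1, inv_mul_cancel₀ hμ_pos.ne']
  · have : (μ : ℂ) ≠ 0 := by exact_mod_cast hμ_pos.ne'
    rw [h_apply, mul_inv_cancel_left₀ this]

section Limits
variable {ι : Type*} {l : Filter ι} {τ : ι → WeakDual ℂ A} {g : ι → A} {S : WeakDual ℂ A}

theorem apply_mul_comm_of_tendsto [l.NeBot] (hτ : ∀ i, τ i ∈ tracialStateSet A)
    (hg : ∀ b, Tendsto (fun i => ‖g i * b - b * g i‖) l (𝓝 0))
    (hS : ∀ a, Tendsto (fun i => τ i (a * g i)) l (𝓝 (S a))) (a b : A) :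
    S (a * b) = S (b * a) := by
  have h_comm : ∀ i, τ i ((a * b) * g i) - τ i ((b * a) * g i) = τ i (a * (b * g i - g i * b)) := by
    intro i
    rw [mul_sub, map_sub, mul_assoc, mul_assoc b, (hτ i).1 b, mul_assoc]
  have h_small : Tendsto (fun i => τ i ((a * b) * g i) - τ i ((b * a) * g i)) l (𝓝 0) := by
    refine squeeze_zero_norm (fun i => ?_) (by simpa using (hg b).const_mul ‖a‖)
    calc ‖τ i ((a * b) * g i) - τ i ((b * a) * g i)‖ ≤ ‖a * (b * g i - g i * b)‖ := by
          rw [h_comm]; exact tracialStateSet.norm_apply_le (hτ i) _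
      _ ≤ ‖a‖ * ‖g i * b - b * g i‖ := by rw [norm_sub_rev (g i * b)]; exact norm_mul_le _ _
  exact sub_eq_zero.mp (tendsto_nhds_unique ((hS _).sub (hS _)) h_small)

theorem apply_nonneg_of_tendsto [l.NeBot] (hτ : ∀ i, τ i ∈ tracialStateSet A) (hg : ∀ i, 0 ≤ g i)
    (hS : ∀ a, Tendsto (fun i => τ i (a * g i)) l (𝓝 (S a))) {a : A} (ha : 0 ≤ a) : 0 ≤ S a :=
  ge_of_tendsto' (hS a) fun i => tracialStateSet.apply_mul_nonneg (hτ i) ha (hg i)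

theorem exists_tendsto_norm_sub_le (hcomp : IsCompact (tracialStateSet A)) (U : Ultrafilter ι)
    (hτ : ∀ i, τ i ∈ tracialStateSet A) (hg : ∀ i, 0 ≤ g i ∧ ‖g i‖ ≤ 1)
    (hg_comm : ∀ b, Tendsto (fun i => ‖g i * b - b * g i‖) U (𝓝 0)) (c : A) (θ : ℝ) {M : ℝ}
    (hM : ∀ φ ∈ tracialStateSet A, ‖φ c - (θ : ℂ)‖ ≤ M) :
    ∃ L ≤ M, Tendsto (fun i => ‖τ i (c * g i) - (θ : ℂ) * τ i (g i)‖) U (𝓝 L) := by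
  obtain ⟨T, hT, hτT⟩ := hcomp.exists_tendsto_ultrafilter U hτ
  obtain ⟨S, -, hσS⟩ := (WeakDual.isCompact_closedBall (0 : StrongDual ℂ A) 1)
    |>.exists_tendsto_ultrafilter U (u := fun i => mulRight (τ i) (g i))
      fun i => by simpa using tracialStateSet.norm_mulRight_le (hτ i) (hg i).2
  obtain ⟨μ, hμ, hτμ⟩ := isCompact_Icc.exists_tendsto_ultrafilter U
    (u := fun i => (τ i (g i)).re) fun i =>
      ⟨((hτ i).2.1 _ (hg i).1).1, (Complex.re_le_norm _).trans
        ((tracialStateSet.norm_apply_le (hτ i) _).trans (hg i).2)⟩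
  have hT_lim : ∀ a, Tendsto (fun i => τ i a) U (𝓝 (T a)) :=
    fun a => ((WeakDual.eval_continuous a).tendsto T).comp hτT
  have hS_lim : ∀ a, Tendsto (fun i => τ i (a * g i)) U (𝓝 (S a)) :=
    fun a => ((WeakDual.eval_continuous a).tendsto S).comp hσS
  obtain ⟨ρ, hρ, hSρ⟩ := exists_mem_tracialStateSet_eq_mul hT
    (apply_mul_comm_of_tendsto hτ hg_comm hS_lim)
    (fun a => apply_nonneg_of_tendsto hτ (fun i => (hg i).1) hS_lim) hμ
    (fun a => le_of_tendsto_of_tendsto' (hS_lim a).norm (hτμ.const_mul ‖a‖)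
      fun i => tracialStateSet.norm_apply_mul_le (hτ i) a (hg i).1)
    (fun a => le_of_tendsto_of_tendsto' ((hT_lim a).sub (hS_lim a)).norm
      ((tendsto_const_nhds.sub hτμ).const_mul ‖a‖)
      fun i => tracialStateSet.norm_apply_sub_apply_mul_le (hτ i) a (hg i).1 (hg i).2)
  have hτg : Tendsto (fun i => τ i (g i)) U (𝓝 (μ : ℂ)) := by
    refine (Complex.continuous_ofReal.tendsto μ).comp hτμ |>.congr fun i => ?_
    exact Complex.conj_eq_iff_re.mp
      (tracialStateSet.apply_nonneg (hτ i) (hg i).1).isSelfAdjoint.star_eq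
  refine ⟨μ * ‖ρ c - θ‖, ?_, ?_⟩
  · have hM0 : 0 ≤ M := (norm_nonneg _).trans (hM T hT)
    nlinarith [hM ρ hρ, hμ.1, hμ.2, norm_nonneg (ρ c - θ)]
  · convert ((hS_lim c).sub (hτg.const_mul (θ : ℂ))).norm using 2
    rw [hSρ, mul_comm (θ : ℂ), ← mul_sub, norm_mul, Complex.norm_real, Real.norm_of_nonneg hμ.1]

end Limits

end TracialState

theorem central_sequence_trace_estimate_general
    {A : Type u} [NonUnitalCStarAlgebra A] [PartialOrder A] [StarOrderedRing A]
    (hne : (tracialStateSet A).Nonempty) (hcomp : IsCompact (tracialStateSet A))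
    (c : A) (θ : ℝ)
    (f : ℕ → A) (hf : IsCentralSeq f) (hfc : ∀ n, 0 ≤ f n ∧ ‖f n‖ ≤ 1) :
    Filter.limsup (fun n => sSup ((fun φ : WeakDual ℂ A =>
        ‖φ (c * f n) - (θ : ℂ) * φ (f n)‖) '' tracialStateSet A)) atTop
      ≤ 2 * sSup ((fun φ : WeakDual ℂ A =>
        ‖φ c - (θ : ℂ)‖) '' tracialStateSet A) := by
  set M := sSup ((fun φ : WeakDual ℂ A => ‖φ c - (θ : ℂ)‖) '' tracialStateSet A)
  have hM : ∀ φ ∈ tracialStateSet A, ‖φ c - (θ : ℂ)‖ ≤ M := fun φ hφ =>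
    le_csSup (hcomp.image ((WeakDual.eval_continuous c).sub continuous_const).norm).bddAbove
      ⟨φ, hφ, rfl⟩
  choose τ hτ hτ_max using fun n => hcomp.exists_sSup_image_eq hne
    (f := fun φ : WeakDual ℂ A => ‖φ (c * f n) - (θ : ℂ) * φ (f n)‖)
    (((WeakDual.eval_continuous _).sub
      (continuous_const.mul (WeakDual.eval_continuous _))).norm.continuousOn)
  calc _ = limsup (fun n => ‖τ n (c * f n) - (θ : ℂ) * τ n (f n)‖) atTop := by simp_rw [hτ_max]
    _ ≤ M := limsup_le_of_forall_ultrafilter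
        (isCoboundedUnder_le_of_le atTop fun n => norm_nonneg _)
        fun U hU => exists_tendsto_norm_sub_le hcomp U hτ hfc (fun b => (hf b).mono_left hU) c θ hM
    _ ≤ 2 * M := by linarith [(norm_nonneg _).trans (hM _ hne.some_mem)]

/-- **Lemma 5.5.**  Let `A` be separable with non-empty compact tracial state space, let
`c ∈ A₊` and `θ ∈ ℝ`.  For every central sequence `(f_n)` of positive contractions,
`limsup_n max_τ |τ(c f_n) - θ τ(f_n)| ≤ 2 max_τ |τ(c) - θ|`. -/
theorem central_sequence_trace_estimate
    {A : Type u} [NonUnitalCStarAlgebra A] [PartialOrder A] [StarOrderedRing A]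
    (hsep : TopologicalSpace.SeparableSpace A)
    (hne : (tracialStateSet A).Nonempty) (hcomp : IsCompact (tracialStateSet A))
    (c : A) (hc : 0 ≤ c) (θ : ℝ)
    (f : ℕ → A) (hf : IsCentralSeq f) (hfc : ∀ n, 0 ≤ f n ∧ ‖f n‖ ≤ 1) :
    Filter.limsup (fun n => sSup ((fun φ : WeakDual ℂ A =>
        ‖φ (c * f n) - (θ : ℂ) * φ (f n)‖) '' tracialStateSet A)) atTop
      ≤ 2 * sSup ((fun φ : WeakDual ℂ A =>
        ‖φ c - (θ : ℂ)‖) '' tracialStateSet A) :=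
  central_sequence_trace_estimate_general hne hcomp c θ f hf hfc

end Paper
end
end
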